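/- For a relation r on a finite type with n elements, the boolean matrix sequence T_0 = A, T_{k+1} = T_k + T_k·T_k (boolean addition and multiplication, with A the adjacency matrix of r) stabilizes after at most ⌈log₂ n⌉ iterations at the transitive closure of A. In particular the transitive closure can be computed with O(log n) boolean matrix multiplications. -/

import Mathlib

/-!
`T k` relates `i` to `j` exactly when `j` is reachable from `i` by an `r`-path with between `1`
and `2 ^ k` steps, because two such paths of length at most `2 ^ k` concatenate to one of length
at most `2 ^ (k + 1)`, and every path that long splits at step `2 ^ k`. For fixed `i`, the sets
reachable within `n` steps increase with `n`, and each is determined by the previous one, so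
they stop growing as soon as they fail to grow once. Hence they are constant from
`n = card α` on, and `2 ^ ⌈log₂ (card α)⌉ ≥ card α`.
-/

theorem Set.eq_of_monotone_of_stabilises {α : Type*} [Finite α] {s : ℕ → Set α}
    (hmono : Monotone s) (hstab : ∀ m, s m = s (m + 1) → s (m + 1) = s (m + 2))
    {n : ℕ} (hn : Nat.card α ≤ n) : s n = s (Nat.card α) := by
  have eq_of_ncard_eq {m m' : ℕ} (h : m ≤ m') (hcard : (s m).ncard = (s m').ncard) : s m = s m' :=
    Set.eq_of_subset_of_ncard_le (hmono h) hcard.ge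
  have hcard : (s n).ncard = (s (Nat.card α)).ncard :=
    Nat.stabilises_of_monotone (Set.ncard_mono.comp hmono) (fun m => Set.ncard_le_card _)
      (fun m h => congrArg Set.ncard (hstab m (eq_of_ncard_eq m.le_succ h))) hn
  exact (eq_of_ncard_eq hn hcard.symm).symm

namespace Relation

variable {α : Type*} (r : α → α → Prop)

/-- `BoundedTransGen r n a b`: `b` is reachable from `a` by an `r`-path with `1` to `n` steps. -/
def BoundedTransGen : ℕ → α → α → Prop
  | 0, _, _ => False
  | n + 1, a, b => r a b ∨ ∃ c, BoundedTransGen n a c ∧ r c b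

variable {r}

theorem BoundedTransGen.single {n : ℕ} (hn : 0 < n) {a b : α} (h : r a b) :
    BoundedTransGen r n a b := by
  obtain ⟨n, rfl⟩ := Nat.exists_eq_add_of_lt hn
  exact .inl h

theorem BoundedTransGen.succ {n : ℕ} {a b : α} (h : BoundedTransGen r n a b) :
    BoundedTransGen r (n + 1) a b := by
  induction n generalizing b with
  | zero => exact h.elim
  | succ n ih =>
    rcases h with hab | ⟨c, hac, hcb⟩
    · exact .inl hab
    · exact .inr ⟨c, ih hac, hcb⟩

theorem BoundedTransGen.monotone : Monotone (BoundedTransGen r) :=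
  monotone_nat_of_le_succ fun _ _ _ => BoundedTransGen.succ

theorem BoundedTransGen.transGen {n : ℕ} {a b : α} (h : BoundedTransGen r n a b) :
    TransGen r a b := by
  induction n generalizing b with
  | zero => exact h.elim
  | succ n ih =>
    rcases h with hab | ⟨c, hac, hcb⟩
    · exact .single hab
    · exact (ih hac).tail hcb

theorem transGen_iff_exists_boundedTransGen {a b : α} :
    TransGen r a b ↔ ∃ n, BoundedTransGen r n a b := by
  refine ⟨fun h => ?_, fun ⟨_, h⟩ => h.transGen⟩
  induction h with
  | single hab => exact ⟨1, .single one_pos hab⟩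
  | tail _ hcb ih =>
    obtain ⟨n, hac⟩ := ih
    exact ⟨n + 1, .inr ⟨_, hac, hcb⟩⟩

theorem boundedTransGen_add {m : ℕ} (hm : 0 < m) (n : ℕ) (a b : α) :
    BoundedTransGen r (m + n) a b ↔
      BoundedTransGen r m a b ∨ ∃ c, BoundedTransGen r m a c ∧ BoundedTransGen r n c b := by
  induction n generalizing b with
  | zero => simp [BoundedTransGen]
  | succ n ih =>
    constructor
    · rintro (hab | ⟨c, hac, hcb⟩)
      · exact .inl (.single hm hab)
      · rcases (ih c).1 hac with hac | ⟨d, had, hdc⟩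
        · exact .inr ⟨c, hac, .inl hcb⟩
        · exact .inr ⟨d, had, .inr ⟨c, hdc, hcb⟩⟩
    · rintro (hab | ⟨c, hac, hcb | ⟨d, hcd, hdb⟩⟩)
      · exact BoundedTransGen.monotone (m.le_add_right _) _ _ hab
      · exact .inr ⟨c, BoundedTransGen.monotone (m.le_add_right n) _ _ hac, hcb⟩
      · exact .inr ⟨d, (ih d).2 (.inr ⟨c, hac, hcd⟩), hdb⟩

theorem boundedTransGen_iff_transGen [Finite α] {n : ℕ} (hn : Nat.card α ≤ n) (a b : α) :
    BoundedTransGen r n a b ↔ TransGen r a b := by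
  -- the set reachable from `a` within `m + 1` steps is a function of the one within `m` steps
  have hstab (m : ℕ) (h : BoundedTransGen r m a = BoundedTransGen r (m + 1) a) :
      BoundedTransGen r (m + 1) a = BoundedTransGen r (m + 2) a := by
    funext c
    show (r a c ∨ ∃ d, BoundedTransGen r m a d ∧ r d c) =
      (r a c ∨ ∃ d, BoundedTransGen r (m + 1) a d ∧ r d c)
    rw [h]
  have hconst {n : ℕ} (hn : Nat.card α ≤ n) :
      BoundedTransGen r n a = BoundedTransGen r (Nat.card α) a :=
    Set.eq_of_monotone_of_stabilises (fun _ _ h => BoundedTransGen.monotone h a) hstab hn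
  refine ⟨BoundedTransGen.transGen, fun h => ?_⟩
  obtain ⟨m, hm⟩ := transGen_iff_exists_boundedTransGen.1 h
  rw [hconst hn, ← hconst (le_max_right m _)]
  exact BoundedTransGen.monotone (le_max_left _ _) a b hm

theorem boundedTransGen_two_pow_of_squaring {T : ℕ → α → α → Prop}
    (hT0 : ∀ a b, T 0 a b ↔ r a b)
    (hTs : ∀ k a b, T (k + 1) a b ↔ (T k a b ∨ ∃ c, T k a c ∧ T k c b)) (k : ℕ) (a b : α) :
    T k a b ↔ BoundedTransGen r (2 ^ k) a b := by
  induction k generalizing a b with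
  | zero => simp [hT0, BoundedTransGen]
  | succ k ih =>
    rw [hTs, pow_succ, mul_two, boundedTransGen_add (by positivity)]
    simp only [ih]

end Relation

/-- Fischer–Meyer squaring: `T 0 = A`, `T (k+1) = T k + T k · T k` (boolean
addition and product). `T k` stabilizes after at most `⌈log₂ n⌉` iterations at
the transitive closure of the relation `r` whose adjacency matrix is `A`. -/
theorem stmt_4 {α : Type*} [Fintype α] (r : α → α → Prop)
    (T : ℕ → α → α → Prop)
    (hT0 : ∀ i j, T 0 i j ↔ r i j)
    (hTs : ∀ k i j, T (k+1) i j ↔ (T k i j ∨ ∃ l, T k i l ∧ T k l j)) :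
    ∀ k, Nat.clog 2 (Fintype.card α) ≤ k →
      ∀ i j, T k i j ↔ Relation.TransGen r i j := by
  intro k hk i j
  rw [Relation.boundedTransGen_two_pow_of_squaring hT0 hTs, Relation.boundedTransGen_iff_transGen]
  calc Nat.card α = Fintype.card α := Nat.card_eq_fintype_card
    _ ≤ 2 ^ Nat.clog 2 (Fintype.card α) := Nat.le_pow_clog one_lt_two _
    _ ≤ 2 ^ k := Nat.pow_le_pow_right two_pos hk
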